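/- arXiv:2105.00082 — 3 statements merged into one kernel-verified Lean document; each statement's English description precedes it below -/
import Mathlib

section
/- For a partial chain and an item c not appearing in the chain, c is equally likely to be at any rank in a uniformly random linear extension: Pr(c→j) = 1/m for every rank j. -/
open scoped Classical BigOperators

/-- Permutation of positions that moves position `i` to position `k`,
preserving the relative order of other positions. -/
noncomputable def moveEquiv {n : ℕ} (i k : Fin (n + 1)) : Equiv.Perm (Fin (n + 1)) :=
  (finSuccEquiv' i).trans (finSuccEquiv' k).symm

lemma moveEquiv_apply_self {n : ℕ} (i k : Fin (n + 1)) : moveEquiv i k i = k := by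
  simp [moveEquiv]

lemma moveEquiv_inv {n : ℕ} (i k : Fin (n + 1)) :
    (moveEquiv i k)⁻¹ = moveEquiv k i := rfl

lemma moveEquiv_lt_iff {n : ℕ} (i k : Fin (n + 1)) {x y : Fin (n + 1)}
    (hx : x ≠ i) (hy : y ≠ i) :
    moveEquiv i k x < moveEquiv i k y ↔ x < y := by
  obtain ⟨a, rfl⟩ := Fin.exists_succAbove_eq hx
  obtain ⟨b, rfl⟩ := Fin.exists_succAbove_eq hy
  simp only [moveEquiv, Equiv.trans_apply, finSuccEquiv'_succAbove,
    finSuccEquiv'_symm_some]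
  rw [Fin.succAbove_lt_succAbove_iff, Fin.succAbove_lt_succAbove_iff]

lemma moveEquiv_mul_cancel {n : ℕ} (i k : Fin (n + 1)) :
    moveEquiv k i * moveEquiv i k = 1 := by
  ext x
  simp [moveEquiv, Equiv.Perm.mul_apply]

lemma fiber_card_eq {n : ℕ} (P : Fin (n + 1) → Fin (n + 1) → Prop)
    (c : Fin (n + 1)) (hPc : ∀ a b, P a b → a ≠ c ∧ b ≠ c)
    (Ω : Finset (Equiv.Perm (Fin (n + 1))))
    (hΩ : Ω = Finset.univ.filter
      (fun σ : Equiv.Perm (Fin (n + 1)) => ∀ a b, P a b → σ⁻¹ a < σ⁻¹ b))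
    (i k : Fin (n + 1)) :
    (Ω.filter (fun σ => σ⁻¹ c = i)).card = (Ω.filter (fun σ => σ⁻¹ c = k)).card := by
  have key : ∀ (i k : Fin (n + 1)) (σ : Equiv.Perm (Fin (n + 1))),
      σ ∈ Ω.filter (fun σ => σ⁻¹ c = i) →
      σ * (moveEquiv i k)⁻¹ ∈ Ω.filter (fun σ => σ⁻¹ c = k) := by
    intro i k σ hσ
    rw [Finset.mem_filter] at hσ ⊢
    obtain ⟨hσΩ, hσc⟩ := hσ
    rw [hΩ, Finset.mem_filter] at hσΩ
    constructor
    · rw [hΩ, Finset.mem_filter]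
      refine ⟨Finset.mem_univ _, fun a b hab => ?_⟩
      have h1 : σ⁻¹ a ≠ i := by
        intro h
        exact (hPc a b hab).1 ((Equiv.injective σ⁻¹) (h.trans hσc.symm))
      have h2 : σ⁻¹ b ≠ i := by
        intro h
        exact (hPc a b hab).2 ((Equiv.injective σ⁻¹) (h.trans hσc.symm))
      have := hσΩ.2 a b hab
      simpa [mul_inv_rev, Equiv.Perm.mul_apply, moveEquiv_lt_iff i k h1 h2]
        using (moveEquiv_lt_iff i k h1 h2).mpr this
    · simp [mul_inv_rev, Equiv.Perm.mul_apply, hσc, moveEquiv_apply_self]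
  refine Finset.card_nbij' (fun σ => σ * (moveEquiv i k)⁻¹) (fun σ => σ * (moveEquiv k i)⁻¹)
    (key i k) ?_ ?_ ?_
  · intro σ hσ; exact key k i σ hσ
  · intro σ _
    show σ * (moveEquiv i k)⁻¹ * (moveEquiv k i)⁻¹ = σ
    rw [moveEquiv_inv, moveEquiv_inv, mul_assoc, moveEquiv_mul_cancel, mul_one]
  · intro σ _
    show σ * (moveEquiv k i)⁻¹ * (moveEquiv i k)⁻¹ = σ
    rw [moveEquiv_inv, moveEquiv_inv, mul_assoc, moveEquiv_mul_cancel, mul_one]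

theorem stmt_12 {m : ℕ} (S : Finset (Fin m)) (P : Fin m → Fin m → Prop)
    (hP : IsStrictOrder (Fin m) P)
    (hS : ∀ a b, P a b → a ∈ S ∧ b ∈ S)
    (htot : ∀ a ∈ S, ∀ b ∈ S, a ≠ b → P a b ∨ P b a)
    (c : Fin m) (hc : c ∉ S)
    (Ω : Finset (Equiv.Perm (Fin m)))
    (hΩ : Ω = Finset.univ.filter (fun σ : Equiv.Perm (Fin m) => ∀ a b, P a b → σ⁻¹ a < σ⁻¹ b))
    (hne : Ω.Nonempty)
    (j : ℕ) (hj1 : 1 ≤ j) (hj2 : j ≤ m) :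
    ((Ω.filter (fun σ => ((σ⁻¹ c : Fin m) : ℕ) + 1 = j)).card : ℝ) / Ω.card = 1 / m := by
  obtain ⟨n, rfl⟩ : ∃ n, m = n + 1 := ⟨m - 1, by omega⟩
  have hPc : ∀ a b, P a b → a ≠ c ∧ b ≠ c := by
    intro a b hab
    obtain ⟨ha, hb⟩ := hS a b hab
    exact ⟨fun h => hc (h ▸ ha), fun h => hc (h ▸ hb)⟩
  set j0 : Fin (n + 1) := ⟨j - 1, by omega⟩ with hj0
  have hpred : ∀ σ : Equiv.Perm (Fin (n + 1)),
      (((σ⁻¹ c : Fin (n + 1)) : ℕ) + 1 = j) ↔ σ⁻¹ c = j0 := by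
    intro σ
    rw [Fin.ext_iff]
    simp only [hj0]
    omega
  have hfilter : Ω.filter (fun σ => ((σ⁻¹ c : Fin (n + 1)) : ℕ) + 1 = j)
      = Ω.filter (fun σ => σ⁻¹ c = j0) := by
    apply Finset.filter_congr
    intro s _
    exact hpred s
  have hsum : Ω.card = ∑ k : Fin (n + 1), (Ω.filter (fun σ => σ⁻¹ c = k)).card :=
    Finset.card_eq_sum_card_fiberwise (fun σ _ => Finset.mem_univ _)
  have heach : ∀ k : Fin (n + 1),
      (Ω.filter (fun σ => σ⁻¹ c = k)).card = (Ω.filter (fun σ => σ⁻¹ c = j0)).card :=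
    fun k => fiber_card_eq P c hPc Ω hΩ k j0
  have hcard : Ω.card = (n + 1) * (Ω.filter (fun σ => σ⁻¹ c = j0)).card := by
    rw [hsum]
    rw [Finset.sum_congr rfl (fun k _ => heach k)]
    simp [Finset.sum_const, mul_comm]
  have hne0 : (Ω.filter (fun σ => σ⁻¹ c = j0)).card ≠ 0 := by
    intro h
    rw [h, mul_zero] at hcard
    exact hne.card_ne_zero hcard
  have hA' : ((Ω.filter (fun σ => σ⁻¹ c = j0)).card : ℝ) ≠ 0 := by exact_mod_cast hne0
  rw [hfilter, hcard]
  push_cast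
  rw [div_eq_div_iff (by positivity) (by positivity)]
  ring
end

section
/- Under the Repeated Insertion Model with insertion probabilities Π(i,j) = φ^{i−j}/(1+φ+⋯+φ^{i−1}), the probability of generating ranking τ equals the Mallows probability φ^{D(σ,τ)} / ∏_{i=1}^m (1+φ+⋯+φ^{i−1}), where σ is the reference ranking and D is Kendall-tau distance. -/
open scoped Classical BigOperators

theorem stmt_17 {m : ℕ} (φ : ℝ) (hφ0 : 0 < φ) (hφ1 : φ ≤ 1)
    (σ τ : Equiv.Perm (Fin m))
    (pos : Fin m → ℕ)
    (hpos : ∀ i : Fin m, pos i =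
      (Finset.univ.filter (fun l : Fin m => l ≤ i ∧ τ⁻¹ (σ l) ≤ τ⁻¹ (σ i))).card)
    (D : ℕ)
    (hD : D = (Finset.univ.filter (fun p : Fin m × Fin m =>
        σ⁻¹ p.1 < σ⁻¹ p.2 ∧ τ⁻¹ p.2 < τ⁻¹ p.1)).card) :
    ∏ i : Fin m, (φ ^ ((i : ℕ) + 1 - pos i) / ∑ l ∈ Finset.range ((i : ℕ) + 1), φ ^ l) =
    φ ^ D / ∏ i ∈ Finset.range m, ∑ l ∈ Finset.range (i + 1), φ ^ l := by
  classical
  have hcard_le : ∀ i : Fin m, (Finset.univ.filter (fun l : Fin m => l ≤ i)).card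
      = (i : ℕ) + 1 := by
    intro i
    have h : (Finset.univ.filter (fun l : Fin m => l ≤ i)) = Finset.Iic i := by
      ext l; simp
    rw [h, Fin.card_Iic]
  have ha : ∀ i : Fin m, (i : ℕ) + 1 - pos i =
      (Finset.univ.filter (fun l : Fin m => l ≤ i ∧ τ⁻¹ (σ i) < τ⁻¹ (σ l))).card := by
    intro i
    have h := Finset.card_filter_add_card_filter_not
      (s := Finset.univ.filter (fun l : Fin m => l ≤ i))
      (p := fun l => τ⁻¹ (σ l) ≤ τ⁻¹ (σ i))
    rw [Finset.filter_filter, Finset.filter_filter, hcard_le i] at h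
    have hneg : (Finset.univ.filter (fun l : Fin m => l ≤ i ∧ ¬ τ⁻¹ (σ l) ≤ τ⁻¹ (σ i)))
        = (Finset.univ.filter (fun l : Fin m => l ≤ i ∧ τ⁻¹ (σ i) < τ⁻¹ (σ l))) := by
      ext l; simp [not_le]
    rw [hneg, ← hpos i] at h
    omega
  -- sum of the a_i equals D
  have hsum : ∑ i : Fin m, ((i : ℕ) + 1 - pos i) = D := by
    rw [hD]
    calc ∑ i : Fin m, ((i : ℕ) + 1 - pos i)
        = ∑ i : Fin m, (Finset.univ.filter
            (fun l : Fin m => l ≤ i ∧ τ⁻¹ (σ i) < τ⁻¹ (σ l))).card := by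
          exact Finset.sum_congr rfl (fun i _ => ha i)
      _ = ((Finset.univ : Finset (Fin m)).sigma
            (fun i => Finset.univ.filter
              (fun l : Fin m => l ≤ i ∧ τ⁻¹ (σ i) < τ⁻¹ (σ l)))).card := by
          rw [Finset.card_sigma]
      _ = (Finset.univ.filter (fun p : Fin m × Fin m =>
            σ⁻¹ p.1 < σ⁻¹ p.2 ∧ τ⁻¹ p.2 < τ⁻¹ p.1)).card := by
          apply Finset.card_bij' (fun q _ => (σ q.2, σ q.1))
            (fun p _ => ⟨σ⁻¹ p.2, σ⁻¹ p.1⟩)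
          · intro q hq
            simp
          · intro p hp
            simp
          · intro q hq
            simp only [Finset.mem_sigma, Finset.mem_filter, Finset.mem_univ, true_and] at hq
            obtain ⟨hle, hτ⟩ := hq
            simp only [Finset.mem_filter, Finset.mem_univ, true_and]
            refine ⟨?_, ?_⟩
            · simp only [Equiv.Perm.coe_inv, Equiv.symm_apply_apply]
              rcases lt_or_eq_of_le hle with h | h
              · exact h
              · exact absurd (h ▸ hτ) (lt_irrefl _)
            · simpa using hτ
          · intro p hp
            simp only [Finset.mem_filter, Finset.mem_univ, true_and] at hp
            simp only [Finset.mem_sigma, Finset.mem_filter, Finset.mem_univ, true_and]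
            exact ⟨le_of_lt hp.1, by simpa using hp.2⟩
  -- assemble
  have hden : ∀ i : Fin m, (0:ℝ) < ∑ l ∈ Finset.range ((i : ℕ) + 1), φ ^ l := by
    intro i
    apply Finset.sum_pos
    · intro l _; positivity
    · exact ⟨0, Finset.mem_range.mpr (Nat.succ_pos _)⟩
  rw [Finset.prod_div_distrib, Finset.prod_pow_eq_pow_sum, hsum,
    Fin.prod_univ_eq_prod_range (fun i => ∑ l ∈ Finset.range (i + 1), φ ^ l)]
end

section
/- For a partially partitioned preference, the number of linear extensions placing item c (belonging to a block with K_c items, with K_l items in strictly earlier blocks and K_r items in strictly later blocks) at rank j is proportional to Σ_{x=0}^{K_c−1} C(j−1, K_l+x)·C(m−j, K_r+K_c−1−x), where x counts the members of c's block placed before c. -/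
open scoped Classical BigOperators
open Finset

namespace Stmt18Aux

variable {m k : ℕ}

/-- number of items in block l -/
def nblk (blk : Fin m → Option (Fin k)) (l : Fin k) : ℕ :=
  (univ.filter fun x : Fin m => blk x = some l).card

/-- number of items in blocks strictly before l -/
def nlt (blk : Fin m → Option (Fin k)) (l : Fin k) : ℕ :=
  (univ.filter fun x : Fin m => ∃ b, blk x = some b ∧ b < l).card

/-- number of blocked items -/
def nB (blk : Fin m → Option (Fin k)) : ℕ :=
  (univ.filter fun x : Fin m => (blk x).isSome).card

/-- rank of a position among a set of positions -/
def rk (T : Finset (Fin m)) (q : Fin m) : ℕ := (T.filter (· < q)).card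

lemma rk_mono (T : Finset (Fin m)) {q q' : Fin m} (h : q ≤ q') : rk T q ≤ rk T q' :=
  Finset.card_le_card (by
    intro a ha; rw [mem_filter] at *; exact ⟨ha.1, lt_of_lt_of_le ha.2 h⟩)

lemma rk_lt_rk (T : Finset (Fin m)) {q q' : Fin m} (hq : q ∈ T) (h : q < q') :
    rk T q < rk T q' := by
  apply Finset.card_lt_card
  constructor
  · intro a ha; rw [mem_filter] at *; exact ⟨ha.1, lt_trans ha.2 h⟩
  · intro hsub
    have : q ∈ T.filter (· < q') := mem_filter.2 ⟨hq, h⟩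
    have := hsub this
    simp only [mem_filter] at this
    exact lt_irrefl q this.2

lemma rk_lt_card (T : Finset (Fin m)) {q : Fin m} (hq : q ∈ T) : rk T q < T.card := by
  apply Finset.card_lt_card
  constructor
  · exact filter_subset _ _
  · intro hsub
    have := hsub hq
    simp only [mem_filter] at this
    exact lt_irrefl q this.2

lemma rk_image (T : Finset (Fin m)) : T.image (rk T) = Finset.range T.card := by
  apply Finset.eq_of_subset_of_card_le
  · intro s hs
    rcases Finset.mem_image.1 hs with ⟨q, hq, rfl⟩
    exact Finset.mem_range.2 (rk_lt_card T hq)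
  · rw [Finset.card_range]
    rw [Finset.card_image_of_injOn]
    intro q hq q' hq' h
    rcases lt_trichotomy q q' with h1 | h1 | h1
    · exact absurd h (ne_of_lt (rk_lt_rk T hq h1))
    · exact h1
    · exact absurd h.symm (ne_of_lt (rk_lt_rk T hq' h1))

lemma rk_count (T : Finset (Fin m)) (P : ℕ → Prop) :
    (T.filter fun q => P (rk T q)).card = ((Finset.range T.card).filter P).card := by
  classical
  have hinj : Set.InjOn (rk T) T := by
    intro q hq q' hq' h
    rcases lt_trichotomy q q' with h1 | h1 | h1
    · exact absurd h (ne_of_lt (rk_lt_rk T hq h1))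
    · exact h1
    · exact absurd h.symm (ne_of_lt (rk_lt_rk T hq' h1))
  rw [← Finset.card_image_of_injOn (hinj.mono (Finset.filter_subset _ _))]
  congr 1
  apply Finset.Subset.antisymm
  · intro s hs
    rcases Finset.mem_image.1 hs with ⟨q, hq, rfl⟩
    rw [mem_filter] at hq
    exact mem_filter.2 ⟨by rw [← rk_image]; exact Finset.mem_image_of_mem _ hq.1, hq.2⟩
  · intro s hs
    rw [mem_filter] at hs
    obtain ⟨hr, hP⟩ := hs
    rw [← rk_image] at hr
    rcases Finset.mem_image.1 hr with ⟨q, hq, rfl⟩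
    exact Finset.mem_image_of_mem _ (mem_filter.2 ⟨hq, hP⟩)

variable (blk : Fin m → Option (Fin k))

lemma nlt_add_le {a b : Fin k} (hab : a < b) : nlt blk a + nblk blk a ≤ nlt blk b := by
  classical
  rw [nlt, nblk, ← Finset.card_union_of_disjoint]
  · apply Finset.card_le_card
    intro x hx
    rw [Finset.mem_union, mem_filter, mem_filter] at hx
    rw [mem_filter]
    rcases hx with ⟨h1, bb, h2, h3⟩ | ⟨h1, h2⟩
    · exact ⟨h1, bb, h2, lt_trans h3 hab⟩
    · exact ⟨h1, a, h2, hab⟩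
  · rw [Finset.disjoint_filter]
    rintro x _ ⟨bb, h1, h2⟩ h3
    rw [h3] at h1
    exact absurd (Option.some_injective _ h1) (ne_of_lt h2).symm

lemma nlt_add_le_nB (a : Fin k) : nlt blk a + nblk blk a ≤ nB blk := by
  classical
  rw [nlt, nblk, nB, ← Finset.card_union_of_disjoint]
  · apply Finset.card_le_card
    intro x hx
    rw [Finset.mem_union, mem_filter, mem_filter] at hx
    rw [mem_filter]
    rcases hx with ⟨h1, bb, h2, _⟩ | ⟨h1, h2⟩
    · exact ⟨h1, by rw [h2]; rfl⟩
    · exact ⟨h1, by rw [h2]; rfl⟩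
  · rw [Finset.disjoint_filter]
    rintro x _ ⟨bb, h1, h2⟩ h3
    rw [h3] at h1
    exact absurd (Option.some_injective _ h1) (ne_of_lt h2).symm

lemma interval_unique {a b : Fin k} {s : ℕ}
    (ha : nlt blk a ≤ s ∧ s < nlt blk a + nblk blk a)
    (hb : nlt blk b ≤ s ∧ s < nlt blk b + nblk blk b) : a = b := by
  rcases lt_trichotomy a b with h | h | h
  · have := nlt_add_le blk h; omega
  · exact h
  · have := nlt_add_le blk h; omega

/-- if any item has block b with b < l, then nlt l is at most nlt bm + nblk bm for
the largest such block bm -/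
lemma nlt_le_max {l : Fin k} (hpos : 0 < nlt blk l) :
    ∃ bm, bm < l ∧ 0 < nblk blk bm ∧ nlt blk l ≤ nlt blk bm + nblk blk bm := by
  classical
  rw [nlt] at hpos
  obtain ⟨x, hx⟩ := Finset.card_pos.1 hpos
  rw [mem_filter] at hx
  obtain ⟨_, b0, hb0, hb0l⟩ := hx
  have hne : (univ.filter fun b : Fin k => b < l ∧ 0 < nblk blk b).Nonempty := by
    refine ⟨b0, mem_filter.2 ⟨mem_univ _, hb0l, ?_⟩⟩
    rw [nblk]
    exact Finset.card_pos.2 ⟨x, mem_filter.2 ⟨mem_univ _, hb0⟩⟩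
  set D := univ.filter fun b : Fin k => b < l ∧ 0 < nblk blk b with hD
  have hmax := Finset.max'_mem D hne
  set bm := D.max' hne with hbm
  rw [hD, mem_filter] at hmax
  refine ⟨bm, hmax.2.1, hmax.2.2, ?_⟩
  rw [nlt]
  calc (univ.filter fun x : Fin m => ∃ b, blk x = some b ∧ b < l).card
      ≤ ((univ.filter fun x : Fin m => ∃ b, blk x = some b ∧ b < bm) ∪
         (univ.filter fun x : Fin m => blk x = some bm)).card := by
        apply Finset.card_le_card
        intro y hy
        rw [mem_filter] at hy
        obtain ⟨h1, b, h2, h3⟩ := hy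
        rw [Finset.mem_union, mem_filter, mem_filter]
        rcases lt_trichotomy b bm with hb | hb | hb
        · exact Or.inl ⟨h1, b, h2, hb⟩
        · exact Or.inr ⟨h1, by rw [h2, hb]⟩
        · exfalso
          have hbD : b ∈ D := by
            rw [hD, mem_filter]
            refine ⟨mem_univ _, h3, ?_⟩
            rw [nblk]
            exact Finset.card_pos.2 ⟨y, mem_filter.2 ⟨mem_univ _, h2⟩⟩
          exact absurd (Finset.le_max' D b hbD) (not_le.2 hb)
    _ ≤ _ := by
        rw [nlt, nblk]
        apply Finset.card_union_le

lemma nB_le_max (hpos : 0 < nB blk) :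
    ∃ bm, 0 < nblk blk bm ∧ nB blk ≤ nlt blk bm + nblk blk bm := by
  classical
  rw [nB] at hpos
  obtain ⟨x, hx⟩ := Finset.card_pos.1 hpos
  rw [mem_filter] at hx
  obtain ⟨_, hsome⟩ := hx
  obtain ⟨b0, hb0⟩ := Option.isSome_iff_exists.1 hsome
  have hne : (univ.filter fun b : Fin k => 0 < nblk blk b).Nonempty := by
    refine ⟨b0, mem_filter.2 ⟨mem_univ _, ?_⟩⟩
    rw [nblk]
    exact Finset.card_pos.2 ⟨x, mem_filter.2 ⟨mem_univ _, hb0⟩⟩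
  set D := univ.filter fun b : Fin k => 0 < nblk blk b with hD
  have hmax := Finset.max'_mem D hne
  set bm := D.max' hne with hbm
  rw [hD, mem_filter] at hmax
  refine ⟨bm, hmax.2, ?_⟩
  rw [nB]
  calc (univ.filter fun x : Fin m => (blk x).isSome).card
      ≤ ((univ.filter fun x : Fin m => ∃ b, blk x = some b ∧ b < bm) ∪
         (univ.filter fun x : Fin m => blk x = some bm)).card := by
        apply Finset.card_le_card
        intro y hy
        rw [mem_filter] at hy
        obtain ⟨h1, hy2⟩ := hy
        obtain ⟨b, h2⟩ := Option.isSome_iff_exists.1 hy2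
        rw [Finset.mem_union, mem_filter, mem_filter]
        rcases lt_trichotomy b bm with hb | hb | hb
        · exact Or.inl ⟨h1, b, h2, hb⟩
        · exact Or.inr ⟨h1, by rw [h2, hb]⟩
        · exfalso
          have hbD : b ∈ D := by
            rw [hD, mem_filter]
            refine ⟨mem_univ _, ?_⟩
            rw [nblk]
            exact Finset.card_pos.2 ⟨y, mem_filter.2 ⟨mem_univ _, h2⟩⟩
          exact absurd (Finset.le_max' D b hbD) (not_le.2 hb)
    _ ≤ _ := by
        rw [nlt, nblk]
        apply Finset.card_union_le

/-- every rank below nB is in some block interval -/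
lemma interval_exists {s : ℕ} (hs : s < nB blk) :
    ∃ l, nlt blk l ≤ s ∧ s < nlt blk l + nblk blk l := by
  classical
  obtain ⟨bm, _, hbm⟩ := nB_le_max blk (lt_of_le_of_lt (Nat.zero_le s) hs)
  have hne : (univ.filter fun l : Fin k => s < nlt blk l + nblk blk l).Nonempty :=
    ⟨bm, mem_filter.2 ⟨mem_univ _, lt_of_lt_of_le hs hbm⟩⟩
  set L := univ.filter fun l : Fin k => s < nlt blk l + nblk blk l with hL
  have hmin := Finset.min'_mem L hne
  set ls := L.min' hne with hls
  rw [hL, mem_filter] at hmin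
  refine ⟨ls, ?_, hmin.2⟩
  by_contra hcon
  push_neg at hcon
  obtain ⟨bm', hlt, _, hle⟩ := nlt_le_max blk (lt_of_le_of_lt (Nat.zero_le s) hcon)
  have hbm'L : bm' ∈ L := by
    rw [hL, mem_filter]
    exact ⟨mem_univ _, lt_of_lt_of_le hcon hle⟩
  exact absurd (Finset.min'_le L bm' hbm'L) (not_le.2 hlt)

/-- the block whose interval contains rank s (junk value dflt if none) -/
noncomputable def seg (dflt : Fin k) (s : ℕ) : Fin k :=
  if h : ∃ l, nlt blk l ≤ s ∧ s < nlt blk l + nblk blk l then h.choose else dflt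

lemma seg_eq {dflt a : Fin k} {s : ℕ} (ha : nlt blk a ≤ s ∧ s < nlt blk a + nblk blk a) :
    seg blk dflt s = a := by
  have h : ∃ l, nlt blk l ≤ s ∧ s < nlt blk l + nblk blk l := ⟨a, ha⟩
  rw [seg, dif_pos h]
  exact interval_unique blk h.choose_spec ha

/-- applying a permutation doesn't change counts (instance-agnostic form) -/
lemma card_filter_perm (σ : Equiv.Perm (Fin m)) (P : Fin m → Prop)
    (s t : Finset (Fin m)) (hs : ∀ q, q ∈ s ↔ P (σ q)) (ht : ∀ x, x ∈ t ↔ P x) :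
    s.card = t.card := by
  apply Finset.card_bij (fun q _ => σ q)
  · intro a ha
    exact (ht _).2 ((hs _).1 ha)
  · intro a _ b _ h
    exact σ.injective h
  · intro b hb
    exact ⟨σ.symm b, (hs _).2 (by rw [Equiv.apply_symm_apply]; exact (ht _).1 hb),
      Equiv.apply_symm_apply σ b⟩

/-- the set of positions holding blocked items -/
def posT (σ : Equiv.Perm (Fin m)) : Finset (Fin m) :=
  univ.filter fun q => (blk (σ q)).isSome

lemma mem_posT {σ : Equiv.Perm (Fin m)} {q : Fin m} :
    q ∈ posT blk σ ↔ (blk (σ q)).isSome := by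
  rw [posT, mem_filter]; simp

lemma card_posT (σ : Equiv.Perm (Fin m)) : (posT blk σ).card = nB blk := by
  apply card_filter_perm σ (fun x => (blk x).isSome)
  · intro q; exact mem_posT blk
  · intro x; simp [mem_filter]

/-- validity reformulated in terms of positions -/
def Valid (σ : Equiv.Perm (Fin m)) : Prop :=
  ∀ q q' : Fin m, ∀ a b : Fin k, blk (σ q) = some a → blk (σ q') = some b → a < b → q < q'

lemma valid_iff (σ : Equiv.Perm (Fin m)) :
    (∀ x y : Fin m, (∃ lx ly, blk x = some lx ∧ blk y = some ly ∧ lx < ly) →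
      σ⁻¹ x < σ⁻¹ y) ↔ Valid blk σ := by
  constructor
  · intro h q q' a b ha hb hab
    have := h (σ q) (σ q') ⟨a, b, ha, hb, hab⟩
    simpa using this
  · rintro h x y ⟨lx, ly, hx, hy, hxy⟩
    exact h (σ⁻¹ x) (σ⁻¹ y) lx ly (by simpa using hx) (by simpa using hy) hxy

/-- rank bounds for valid permutations -/
lemma rank_bounds {σ : Equiv.Perm (Fin m)} (hv : Valid blk σ) {q : Fin m} {a : Fin k}
    (ha : blk (σ q) = some a) :
    nlt blk a ≤ rk (posT blk σ) q ∧ rk (posT blk σ) q < nlt blk a + nblk blk a := by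
  classical
  constructor
  · -- lower bound
    rw [rk]
    have hcard : nlt blk a = (univ.filter fun q' => ∃ b, blk (σ q') = some b ∧ b < a).card := by
      rw [nlt]
      refine (card_filter_perm σ (fun x => ∃ b, blk x = some b ∧ b < a) _ _ ?_ ?_).symm
      · intro q'; rw [mem_filter]; simp
      · intro x; rw [mem_filter]; simp
    rw [hcard]
    apply Finset.card_le_card
    intro q' hq'
    rw [mem_filter] at hq'
    obtain ⟨_, b, hb, hba⟩ := hq'
    rw [mem_filter, posT, mem_filter]
    exact ⟨⟨mem_univ _, by rw [hb]; rfl⟩, hv q' q b a hb ha hba⟩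
  · -- upper bound
    rw [rk]
    have hsub : (posT blk σ).filter (· < q) ⊆
        (univ.filter fun q' => ∃ b, blk (σ q') = some b ∧ b ≤ a).erase q := by
      intro q' hq'
      rw [mem_filter, posT, mem_filter] at hq'
      obtain ⟨⟨_, hsome⟩, hlt⟩ := hq'
      obtain ⟨b, hb⟩ := Option.isSome_iff_exists.1 hsome
      rw [Finset.mem_erase, mem_filter]
      refine ⟨ne_of_lt hlt, mem_univ _, b, hb, ?_⟩
      by_contra hcon
      push_neg at hcon
      exact absurd (hv q q' a b ha hb hcon) (not_lt.2 (le_of_lt hlt))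
    have hq : q ∈ univ.filter fun q' => ∃ b, blk (σ q') = some b ∧ b ≤ a :=
      mem_filter.2 ⟨mem_univ _, a, ha, le_refl a⟩
    have h1 := Finset.card_le_card hsub
    rw [Finset.card_erase_of_mem hq] at h1
    have h2 : (univ.filter fun q' => ∃ b, blk (σ q') = some b ∧ b ≤ a).card =
        nlt blk a + nblk blk a := by
      have h3 : (univ.filter fun q' => ∃ b, blk (σ q') = some b ∧ b ≤ a).card =
          (univ.filter fun x : Fin m => ∃ b, blk x = some b ∧ b ≤ a).card := by
        refine card_filter_perm σ (fun x => ∃ b, blk x = some b ∧ b ≤ a) _ _ ?_ ?_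
        · intro q'; rw [mem_filter]; simp
        · intro x; rw [mem_filter]; simp
      rw [h3, nlt, nblk, ← Finset.card_union_of_disjoint]
      · congr 1
        apply Finset.Subset.antisymm
        · intro x hx
          rw [mem_filter] at hx
          obtain ⟨h1, b, h2, h3⟩ := hx
          rw [Finset.mem_union, mem_filter, mem_filter]
          rcases lt_or_eq_of_le h3 with hb | hb
          · exact Or.inl ⟨h1, b, h2, hb⟩
          · exact Or.inr ⟨h1, by rw [h2, hb]⟩
        · intro x hx
          rw [Finset.mem_union, mem_filter, mem_filter] at hx
          rw [mem_filter]
          rcases hx with ⟨h1, b, h2, h3⟩ | ⟨h1, h2⟩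
          · exact ⟨h1, b, h2, le_of_lt h3⟩
          · exact ⟨h1, a, h2, le_refl a⟩
      · rw [Finset.disjoint_filter]
        rintro x _ ⟨bb, h1, h2⟩ h3
        rw [h3] at h1
        exact absurd (Option.some_injective _ h1) (ne_of_lt h2).symm
    have hcard : 0 < (univ.filter fun q' => ∃ b, blk (σ q') = some b ∧ b ≤ a).card :=
      Finset.card_pos.2 ⟨q, hq⟩
    omega

/-- converse: rank bounds imply validity -/
lemma valid_of_rank_bounds {σ : Equiv.Perm (Fin m)}
    (h : ∀ q : Fin m, ∀ a : Fin k, blk (σ q) = some a →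
      nlt blk a ≤ rk (posT blk σ) q ∧ rk (posT blk σ) q < nlt blk a + nblk blk a) :
    Valid blk σ := by
  intro q q' a b ha hb hab
  have h1 := h q a ha
  have h2 := h q' b hb
  have h3 := nlt_add_le blk hab
  by_contra hcon
  push_neg at hcon
  have := rk_mono (posT blk σ) hcon
  omega

lemma rk_count' (T : Finset (Fin m)) (P : ℕ → Prop) (s : Finset (Fin m)) (t : Finset ℕ)
    (hs : ∀ q, q ∈ s ↔ q ∈ T ∧ P (rk T q))
    (ht : ∀ n, n ∈ t ↔ n < T.card ∧ P n) : s.card = t.card := by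
  apply Finset.card_bij (fun q _ => rk T q)
  · intro q hq
    rw [hs] at hq
    rw [ht]
    exact ⟨rk_lt_card T hq.1, hq.2⟩
  · intro q1 hq1 q2 hq2 h
    rw [hs] at hq1 hq2
    rcases lt_trichotomy q1 q2 with h1 | h1 | h1
    · exact absurd h (ne_of_lt (rk_lt_rk T hq1.1 h1))
    · exact h1
    · exact absurd h.symm (ne_of_lt (rk_lt_rk T hq2.1 h1))
  · intro n hn
    rw [ht] at hn
    have : n ∈ T.image (rk T) := by
      rw [rk_image]
      exact Finset.mem_range.2 hn.1
    rcases Finset.mem_image.1 this with ⟨q, hq, hrk⟩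
    exact ⟨q, (hs q).2 ⟨hq, by rw [hrk]; exact hn.2⟩, hrk⟩

lemma card_seg_filter (dflt l : Fin k) (T : Finset (Fin m)) (hT : T.card = nB blk)
    (s : Finset (Fin m)) (hs : ∀ q, q ∈ s ↔ q ∈ T ∧ seg blk dflt (rk T q) = l) :
    s.card = nblk blk l := by
  have h := rk_count' T (fun n => seg blk dflt n = l) s
      (Finset.Ico (nlt blk l) (nlt blk l + nblk blk l)) hs ?_
  · rw [h, Nat.card_Ico]
    omega
  · intro n
    rw [Finset.mem_Ico, hT]
    constructor
    · intro hb
      have hsB : n < nB blk := lt_of_lt_of_le hb.2 (nlt_add_le_nB blk l)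
      exact ⟨hsB, seg_eq blk hb⟩
    · rintro ⟨hn, hseg⟩
      obtain ⟨l', hl'⟩ := interval_exists blk hn
      rw [seg_eq blk hl'] at hseg
      rw [← hseg]
      exact hl'

lemma range_filter_seg (dflt l : Fin k) :
    (Finset.range (nB blk)).filter (fun s => seg blk dflt s = l) =
      Finset.Ico (nlt blk l) (nlt blk l + nblk blk l) := by
  ext s
  simp only [Finset.mem_filter, Finset.mem_range, Finset.mem_Ico]
  constructor
  · rintro ⟨hs, hseg⟩
    obtain ⟨l', hl'⟩ := interval_exists blk hs
    rw [seg_eq blk hl'] at hseg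
    rw [← hseg]
    exact hl'
  · intro hb
    have hsB : s < nB blk := lt_of_lt_of_le hb.2 (nlt_add_le_nB blk l)
    exact ⟨hsB, seg_eq blk hb⟩

end Stmt18Aux

open Stmt18Aux

theorem stmt_18 {m k : ℕ} (blk : Fin m → Option (Fin k))
    (c : Fin m) (i : Fin k) (hci : blk c = some i)
    (Kc Kl Kr : ℕ)
    (hKc : Kc = (Finset.univ.filter (fun x : Fin m => blk x = some i)).card)
    (hKl : Kl = (Finset.univ.filter (fun x : Fin m => ∃ l, blk x = some l ∧ l < i)).card)
    (hKr : Kr = (Finset.univ.filter (fun x : Fin m => ∃ l, blk x = some l ∧ i < l)).card)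
    (N : ℕ → ℕ)
    (hN : ∀ j, N j = (Finset.univ.filter (fun σ : Equiv.Perm (Fin m) =>
        (∀ x y : Fin m, (∃ lx ly, blk x = some lx ∧ blk y = some ly ∧ lx < ly) →
          σ⁻¹ x < σ⁻¹ y) ∧ ((σ⁻¹ c : Fin m) : ℕ) + 1 = j)).card) :
    ∃ F : ℕ, ∀ j, 1 ≤ j → j ≤ m →
      N j = (∑ x ∈ Finset.range Kc,
        Nat.choose (j - 1) (Kl + x) * Nat.choose (m - j) (Kr + Kc - 1 - x)) * F := by
  classical
  set bhat : Fin m → Option (Fin k) × Bool := fun x => (blk x, decide (x = c)) with hbhat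
  refine ⟨(univ.filter fun ρ : Equiv.Perm (Fin m) => ∀ q, bhat (ρ q) = bhat q).card, ?_⟩
  intro j hj1 hjm
  have hm : 0 < m := lt_of_lt_of_le hj1 hjm
  set p : Fin m := ⟨j - 1, by omega⟩ with hp
  -- basic identifications
  have hnblk : nblk blk i = Kc := by rw [nblk, hKc]
  have hnlt : nlt blk i = Kl := by rw [nlt, hKl]
  have hKc1 : 1 ≤ Kc := by
    rw [hKc]
    exact Finset.card_pos.2 ⟨c, Finset.mem_filter.2 ⟨Finset.mem_univ _, hci⟩⟩
  have hB : nB blk = Kl + Kc + Kr := by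
    rw [nB, hKl, hKc, hKr]
    rw [← Finset.card_union_of_disjoint, ← Finset.card_union_of_disjoint]
    · congr 1
      apply Finset.Subset.antisymm
      · intro x hx
        rw [Finset.mem_filter] at hx
        obtain ⟨h1, hs⟩ := hx
        obtain ⟨b, hb⟩ := Option.isSome_iff_exists.1 hs
        simp only [Finset.mem_union, Finset.mem_filter]
        rcases lt_trichotomy b i with h | h | h
        · exact Or.inl (Or.inl ⟨h1, b, hb, h⟩)
        · exact Or.inl (Or.inr ⟨h1, by rw [hb, h]⟩)
        · exact Or.inr ⟨h1, b, hb, h⟩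
      · intro x hx
        simp only [Finset.mem_union, Finset.mem_filter] at hx
        rw [Finset.mem_filter]
        rcases hx with (⟨h1, b, h2, _⟩ | ⟨h1, h2⟩) | ⟨h1, b, h2, _⟩ <;>
          exact ⟨h1, by rw [h2]; rfl⟩
    · rw [Finset.disjoint_union_left]
      constructor
      · rw [Finset.disjoint_filter]
        rintro x _ ⟨b, h1, h2⟩ ⟨b', h3, h4⟩
        rw [h1] at h3
        have hbb := Option.some_injective _ h3
        rw [← hbb] at h4
        exact absurd h4 (not_lt.2 (le_of_lt h2))
      · rw [Finset.disjoint_filter]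
        rintro x _ h1 ⟨b, h2, h3⟩
        rw [h1] at h2
        have hbb := Option.some_injective _ h2
        rw [← hbb] at h3
        exact absurd h3 (lt_irrefl i)
    · rw [Finset.disjoint_filter]
      rintro x _ ⟨b, h1, h2⟩ h3
      rw [h3] at h1
      have hbb := Option.some_injective _ h1
      rw [hbb] at h2
      exact absurd h2 (lt_irrefl b)
  -- the finset of possible position-sets for blocked items other than c
  set Q𝒬 : Finset (Finset (Fin m)) := univ.filter (fun Q : Finset (Fin m) =>
      p ∉ Q ∧ Q.card + 1 = nB blk ∧ Kl ≤ (Q.filter (· < p)).card ∧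
      (Q.filter (· < p)).card < Kl + Kc) with hQ𝒬
  set key : Equiv.Perm (Fin m) → Finset (Fin m) := fun σ => (posT blk σ).erase p with hkey
  set Aj : Finset (Equiv.Perm (Fin m)) := (Finset.univ.filter (fun σ : Equiv.Perm (Fin m) =>
        (∀ x y : Fin m, (∃ lx ly, blk x = some lx ∧ blk y = some ly ∧ lx < ly) →
          σ⁻¹ x < σ⁻¹ y) ∧ ((σ⁻¹ c : Fin m) : ℕ) + 1 = j)) with hAj
  -- membership facts for elements of Aj
  have hAj_mem : ∀ σ ∈ Aj, Valid blk σ ∧ σ p = c ∧ p ∈ posT blk σ := by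
    intro σ hσ
    rw [hAj, Finset.mem_filter] at hσ
    obtain ⟨_, hv', hr⟩ := hσ
    have hv := (valid_iff blk σ).1 hv'
    have hpc : σ⁻¹ c = p := by
      apply Fin.ext
      simp only [hp]
      omega
    have hσp : σ p = c := by rw [← hpc]; exact Equiv.apply_symm_apply σ c
    refine ⟨hv, hσp, ?_⟩
    rw [mem_posT, hσp, hci]
    rfl
  have hmaps : ∀ σ ∈ Aj, key σ ∈ Q𝒬 := by
    intro σ hσ
    obtain ⟨hv, hσp, hpT⟩ := hAj_mem σ hσ
    rw [hQ𝒬, Finset.mem_filter]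
    have hfilter_eq : ((posT blk σ).erase p).filter (· < p) = (posT blk σ).filter (· < p) := by
      apply Finset.Subset.antisymm
      · intro q hq
        rw [Finset.mem_filter, Finset.mem_erase] at hq
        exact Finset.mem_filter.2 ⟨hq.1.2, hq.2⟩
      · intro q hq
        rw [Finset.mem_filter] at hq
        exact Finset.mem_filter.2 ⟨Finset.mem_erase.2 ⟨ne_of_lt hq.2, hq.1⟩, hq.2⟩
    have hrb := rank_bounds blk hv (q := p) (a := i) (by rw [hσp]; exact hci)
    rw [hnlt, hnblk] at hrb
    rw [rk] at hrb
    refine ⟨Finset.mem_univ _, Finset.notMem_erase _ _, ?_, ?_, ?_⟩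
    · rw [hkey]
      rw [Finset.card_erase_of_mem hpT, card_posT]
      have : 0 < nB blk := by rw [← card_posT blk σ]; exact Finset.card_pos.2 ⟨p, hpT⟩
      omega
    · rw [hkey, hfilter_eq]; exact hrb.1
    · rw [hkey, hfilter_eq]; exact hrb.2
  have hfiber : ∀ Q ∈ Q𝒬, (Aj.filter fun σ => key σ = Q).card =
      (univ.filter fun ρ : Equiv.Perm (Fin m) => ∀ q, bhat (ρ q) = bhat q).card := by
    intro Q hQ
    rw [hQ𝒬, Finset.mem_filter] at hQ
    obtain ⟨_, hpQ, hcard, hlo, hhi⟩ := hQ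
    set T₀ : Finset (Fin m) := insert p Q with hT₀
    have hpT₀ : p ∈ T₀ := Finset.mem_insert_self _ _
    have hT₀card : T₀.card = nB blk := by
      rw [hT₀, Finset.card_insert_of_notMem hpQ]
      omega
    have hfiltT₀ : T₀.filter (· < p) = Q.filter (· < p) := by
      rw [hT₀, Finset.filter_insert, if_neg (lt_irrefl p)]
    have hs₀ : Kl ≤ rk T₀ p ∧ rk T₀ p < Kl + Kc := by
      rw [rk, hfiltT₀]
      exact ⟨hlo, hhi⟩
    have hsegp : seg blk i (rk T₀ p) = i := by
      apply seg_eq blk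
      rw [hnlt, hnblk]
      exact hs₀
    set ghat : Fin m → Option (Fin k) × Bool := fun q =>
      (if q ∈ T₀ then some (seg blk i (rk T₀ q)) else none, decide (q = p)) with hghat
    have hgp : ghat p = (some i, true) := by
      rw [hghat]
      dsimp only
      rw [if_pos hpT₀, hsegp]
      simp
    -- characterize the fiber
    have hfe : Aj.filter (fun σ => key σ = Q) =
        univ.filter (fun σ : Equiv.Perm (Fin m) => ∀ q, bhat (σ q) = ghat q) := by
      ext σ
      simp only [Finset.mem_filter, Finset.mem_univ, true_and]
      constructor
      · rintro ⟨hσA, hkeyQ⟩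
        obtain ⟨hv, hσp, hpT⟩ := hAj_mem σ hσA
        have hposT : posT blk σ = T₀ := by
          have hkeyQ' : (posT blk σ).erase p = Q := hkeyQ
          rw [hT₀, ← hkeyQ']
          exact (Finset.insert_erase hpT).symm
        intro q
        rw [hbhat, hghat]
        dsimp only
        rw [Prod.mk.injEq]
        constructor
        · by_cases hqT : q ∈ T₀
          · rw [if_pos hqT]
            have hqpos : q ∈ posT blk σ := by rw [hposT]; exact hqT
            obtain ⟨a, ha⟩ := Option.isSome_iff_exists.1 ((mem_posT blk).1 hqpos)
            have hrb := rank_bounds blk hv ha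
            rw [hposT] at hrb
            rw [ha, seg_eq blk hrb]
          · rw [if_neg hqT]
            have hqpos : q ∉ posT blk σ := by rw [hposT]; exact hqT
            rw [mem_posT blk] at hqpos
            exact Option.not_isSome_iff_eq_none.1 hqpos
        · rw [decide_eq_decide]
          constructor
          · intro h
            apply σ.injective
            rw [h, hσp]
          · intro h
            rw [h, hσp]
      · intro h
        have hopt : ∀ q, blk (σ q) =
            (if q ∈ T₀ then some (seg blk i (rk T₀ q)) else none) := by
          intro q
          have := congrArg Prod.fst (h q)
          rw [hbhat, hghat] at this
          exact this
        have hbool : ∀ q, decide (σ q = c) = decide (q = p) := by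
          intro q
          have := congrArg Prod.snd (h q)
          rw [hbhat, hghat] at this
          exact this
        have hσp : σ p = c := by
          have := hbool p
          rw [decide_eq_decide] at this
          exact this.2 rfl
        have hposT : posT blk σ = T₀ := by
          ext q
          rw [mem_posT blk, hopt q]
          by_cases hqT : q ∈ T₀
          · rw [if_pos hqT]
            simp [hqT]
          · rw [if_neg hqT]
            simp [hqT]
        have hv : Valid blk σ := by
          apply valid_of_rank_bounds
          intro q a ha
          rw [hopt q] at ha
          by_cases hqT : q ∈ T₀
          · rw [if_pos hqT] at ha
            have ha' : seg blk i (rk T₀ q) = a := Option.some_injective _ ha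
            have hrklt : rk T₀ q < nB blk := by
              rw [← hT₀card]
              exact rk_lt_card T₀ hqT
            obtain ⟨l', hl'⟩ := interval_exists blk hrklt
            rw [seg_eq blk hl'] at ha'
            rw [hposT, ← ha']
            exact hl'
          · rw [if_neg hqT] at ha
            exact absurd ha (by simp)
        refine ⟨?_, ?_⟩
        · rw [hAj]
          refine Finset.mem_filter.2 ⟨Finset.mem_univ _, (valid_iff blk σ).2 hv, ?_⟩
          have hinv : σ⁻¹ c = p := by
            rw [← hσp]
            exact Equiv.symm_apply_apply σ p
          rw [hinv, hp]
          simp only []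
          omega
        · show (posT blk σ).erase p = Q
          rw [hposT, hT₀]
          exact Finset.erase_insert hpQ
    rw [hfe]
    -- fiber cardinalities of ghat and bhat agree
    have hw : ∀ w : Option (Fin k) × Bool,
        (univ.filter fun q : Fin m => ghat q = w).card =
        (univ.filter fun x : Fin m => bhat x = w).card := by
      rintro ⟨o, b⟩
      cases b
      · -- b = false
        cases o with
        | none =>
          have h1 : (univ.filter fun q : Fin m => ghat q = (none, false)) = T₀ᶜ := by
            ext q
            rw [Finset.mem_filter, Finset.mem_compl, hghat]
            dsimp only
            rw [Prod.mk.injEq]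
            constructor
            · rintro ⟨_, h2, _⟩
              intro hqT
              rw [if_pos hqT] at h2
              exact Option.some_ne_none _ h2
            · intro hqT
              refine ⟨Finset.mem_univ _, by rw [if_neg hqT], ?_⟩
              rw [decide_eq_false_iff_not]
              intro hqp
              exact hqT (hqp ▸ hpT₀)
          have h2 : (univ.filter fun x : Fin m => bhat x = (none, false)) =
              univ.filter fun x : Fin m => blk x = none := by
            ext x
            rw [Finset.mem_filter, Finset.mem_filter, hbhat]
            dsimp only
            rw [Prod.mk.injEq]
            constructor
            · rintro ⟨h1, h2, _⟩
              exact ⟨h1, h2⟩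
            · rintro ⟨h1, h2⟩
              refine ⟨h1, h2, ?_⟩
              rw [decide_eq_false_iff_not]
              intro hxc
              rw [hxc, hci] at h2
              exact Option.some_ne_none _ h2
          have h3 : (univ.filter fun x : Fin m => blk x = none) =
              (univ.filter fun x : Fin m => (blk x).isSome)ᶜ := by
            ext x
            rw [Finset.mem_filter, Finset.mem_compl, Finset.mem_filter]
            simp [Option.isSome_iff_exists, Option.eq_none_iff_forall_not_mem]
          rw [h1, h2, h3, Finset.card_compl, Finset.card_compl, hT₀card]
          rfl
        | some l =>
          have hTrk : ∀ P : ℕ → Prop, (univ.filter fun q : Fin m =>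
              q ∈ T₀ ∧ P (rk T₀ q)) = T₀.filter fun q => P (rk T₀ q) := by
            intro P
            ext q
            rw [Finset.mem_filter, Finset.mem_filter]
            simp
          by_cases hl : l = i
          · rw [hl]
            -- ghat side: positions in T₀ with segment l, other than p
            have h1 : (univ.filter fun q : Fin m => ghat q = (some i, false)) =
                (T₀.filter fun q => seg blk i (rk T₀ q) = i).erase p := by
              ext q
              rw [Finset.mem_filter, Finset.mem_erase, Finset.mem_filter, hghat]
              dsimp only
              rw [Prod.mk.injEq]
              constructor
              · rintro ⟨_, h2, h3⟩
                rw [decide_eq_false_iff_not] at h3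
                by_cases hqT : q ∈ T₀
                · rw [if_pos hqT] at h2
                  exact ⟨h3, hqT, Option.some_injective _ h2⟩
                · rw [if_neg hqT] at h2
                  exact absurd h2 (by simp)
              · rintro ⟨h3, hqT, h2⟩
                refine ⟨Finset.mem_univ _, by rw [if_pos hqT, h2], ?_⟩
                rw [decide_eq_false_iff_not]
                exact h3
            have h2 : (univ.filter fun x : Fin m => bhat x = (some i, false)) =
                (univ.filter fun x : Fin m => blk x = some i).erase c := by
              ext x
              rw [Finset.mem_filter, Finset.mem_erase, Finset.mem_filter, hbhat]
              dsimp only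
              rw [Prod.mk.injEq]
              constructor
              · rintro ⟨h1, h2, h3⟩
                rw [decide_eq_false_iff_not] at h3
                exact ⟨h3, h1, h2⟩
              · rintro ⟨h3, h1, h2⟩
                refine ⟨h1, h2, ?_⟩
                rw [decide_eq_false_iff_not]
                exact h3
            rw [h1, h2]
            have hpmem : p ∈ T₀.filter fun q => seg blk i (rk T₀ q) = i :=
              Finset.mem_filter.2 ⟨hpT₀, hsegp⟩
            have hcmem : c ∈ univ.filter fun x : Fin m => blk x = some i :=
              Finset.mem_filter.2 ⟨Finset.mem_univ _, hci⟩
            rw [Finset.card_erase_of_mem hpmem, Finset.card_erase_of_mem hcmem]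
            congr 1
            have hcs := card_seg_filter blk i i T₀ hT₀card
                (T₀.filter fun q => seg blk i (rk T₀ q) = i) (fun q => Finset.mem_filter)
            rw [hcs, nblk]
          · -- l ≠ i
            have h1 : (univ.filter fun q : Fin m => ghat q = (some l, false)) =
                T₀.filter fun q => seg blk i (rk T₀ q) = l := by
              ext q
              rw [Finset.mem_filter, Finset.mem_filter, hghat]
              dsimp only
              rw [Prod.mk.injEq]
              constructor
              · rintro ⟨_, h2, _⟩
                by_cases hqT : q ∈ T₀
                · rw [if_pos hqT] at h2
                  exact ⟨hqT, Option.some_injective _ h2⟩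
                · rw [if_neg hqT] at h2
                  exact absurd h2 (by simp)
              · rintro ⟨hqT, h2⟩
                refine ⟨Finset.mem_univ _, by rw [if_pos hqT, h2], ?_⟩
                rw [decide_eq_false_iff_not]
                intro hqp
                rw [hqp, hsegp] at h2
                exact hl h2.symm
            have h2 : (univ.filter fun x : Fin m => bhat x = (some l, false)) =
                univ.filter fun x : Fin m => blk x = some l := by
              ext x
              rw [Finset.mem_filter, Finset.mem_filter, hbhat]
              dsimp only
              rw [Prod.mk.injEq]
              constructor
              · rintro ⟨hx1, hx2, _⟩
                exact ⟨hx1, hx2⟩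
              · rintro ⟨hx1, hx2⟩
                refine ⟨hx1, hx2, ?_⟩
                rw [decide_eq_false_iff_not]
                intro hxc
                rw [hxc, hci] at hx2
                exact hl (Option.some_injective _ hx2.symm).symm.symm
            rw [h1, h2]
            have hcs := card_seg_filter blk i l T₀ hT₀card
                (T₀.filter fun q => seg blk i (rk T₀ q) = l) (fun q => Finset.mem_filter)
            rw [hcs, nblk]
      · -- b = true
        by_cases ho : o = some i
        · rw [ho]
          have h1 : (univ.filter fun q : Fin m => ghat q = (some i, true)) = {p} := by
            ext q
            rw [Finset.mem_filter, Finset.mem_singleton]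
            constructor
            · rintro ⟨_, hq⟩
              have := congrArg Prod.snd hq
              rw [hghat] at this
              dsimp only at this
              rw [decide_eq_true_eq] at this
              exact this
            · intro hq
              rw [hq]
              exact ⟨Finset.mem_univ _, hgp⟩
          have h2 : (univ.filter fun x : Fin m => bhat x = (some i, true)) = {c} := by
            ext x
            rw [Finset.mem_filter, Finset.mem_singleton]
            constructor
            · rintro ⟨_, hx⟩
              have := congrArg Prod.snd hx
              rw [hbhat] at this
              dsimp only at this
              rw [decide_eq_true_eq] at this
              exact this
            · intro hx
              rw [hx, hbhat]
              refine ⟨Finset.mem_univ _, ?_⟩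
              dsimp only
              rw [hci]
              simp
          rw [h1, h2, Finset.card_singleton, Finset.card_singleton]
        · have h1 : (univ.filter fun q : Fin m => ghat q = (o, true)) = ∅ := by
            rw [Finset.eq_empty_iff_forall_notMem]
            intro q hq
            rw [Finset.mem_filter] at hq
            have hsnd := congrArg Prod.snd hq.2
            rw [hghat] at hsnd
            dsimp only at hsnd
            rw [decide_eq_true_eq] at hsnd
            have hfst := congrArg Prod.fst hq.2
            rw [hsnd, hgp] at hfst
            exact ho hfst.symm
          have h2 : (univ.filter fun x : Fin m => bhat x = (o, true)) = ∅ := by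
            rw [Finset.eq_empty_iff_forall_notMem]
            intro x hx
            rw [Finset.mem_filter] at hx
            have hsnd := congrArg Prod.snd hx.2
            rw [hbhat] at hsnd
            dsimp only at hsnd
            rw [decide_eq_true_eq] at hsnd
            have hfst := congrArg Prod.fst hx.2
            rw [hbhat] at hfst
            dsimp only at hfst
            rw [hsnd, hci] at hfst
            exact ho hfst.symm
          rw [h1, h2]
    -- build a permutation realizing ghat, then biject with the stabilizer of bhat
    have hfibcard : ∀ w : Option (Fin k) × Bool,
        Fintype.card {q : Fin m // ghat q = w} = Fintype.card {x : Fin m // bhat x = w} := by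
      intro w
      rw [Fintype.card_subtype, Fintype.card_subtype]
      exact hw w
    set τ : Equiv.Perm (Fin m) :=
      Equiv.ofFiberEquiv (f := ghat) (g := bhat)
        (fun w => Fintype.equivOfCardEq (hfibcard w)) with hτdef
    have hτ : ∀ q, bhat (τ q) = ghat q := fun q =>
      Equiv.ofFiberEquiv_map (fun w => Fintype.equivOfCardEq (hfibcard w)) q
    apply Finset.card_bij (fun σ _ => σ * τ⁻¹)
    · intro σ hσ
      rw [Finset.mem_filter] at hσ
      rw [Finset.mem_filter]
      refine ⟨Finset.mem_univ _, ?_⟩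
      intro q
      have h1 : (σ * τ⁻¹) q = σ (τ⁻¹ q) := rfl
      rw [h1, hσ.2 (τ⁻¹ q), ← hτ (τ⁻¹ q)]
      congr 1
      exact Equiv.apply_symm_apply τ q
    · intro σ1 _ σ2 _ h
      exact mul_right_cancel h
    · intro ρ hρ
      rw [Finset.mem_filter] at hρ
      refine ⟨ρ * τ, ?_, ?_⟩
      · rw [Finset.mem_filter]
        refine ⟨Finset.mem_univ _, ?_⟩
        intro q
        have h1 : (ρ * τ) q = ρ (τ q) := rfl
        rw [h1, hρ.2 (τ q), hτ q]
      · rw [mul_assoc]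
        simp
  have hcount : Q𝒬.card = ∑ x ∈ Finset.range Kc,
      Nat.choose (j - 1) (Kl + x) * Nat.choose (m - j) (Kr + Kc - 1 - x) := by
    have hmaps2 : ∀ Q ∈ Q𝒬, (Q.filter (· < p)).card - Kl ∈ Finset.range Kc := by
      intro Q hQ
      rw [hQ𝒬, Finset.mem_filter] at hQ
      obtain ⟨_, _, _, h3, h4⟩ := hQ
      rw [Finset.mem_range]
      omega
    rw [Finset.card_eq_sum_card_fiberwise hmaps2]
    apply Finset.sum_congr rfl
    intro x hx
    rw [Finset.mem_range] at hx
    -- the fiber over x consists of sets determined by pairs of subsets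
    have hcIio : (Finset.Iio p).card = j - 1 := by
      rw [Fin.card_Iio]
    have hcIoi : (Finset.Ioi p).card = m - j := by
      rw [Fin.card_Ioi]
      simp only [hp]
      omega
    have hbij : ((Q𝒬.filter fun Q => (Q.filter (· < p)).card - Kl = x)).card =
        ((Finset.powersetCard (Kl + x) (Finset.Iio p)) ×ˢ
         (Finset.powersetCard (Kr + Kc - 1 - x) (Finset.Ioi p))).card := by
      apply Finset.card_bij (fun Q _ => (Q.filter (· < p), Q.filter (fun q => p < q)))
      · intro Q hQ
        rw [Finset.mem_filter, hQ𝒬, Finset.mem_filter] at hQ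
        obtain ⟨⟨_, hpQ, hcard, h3, h4⟩, hfib⟩ := hQ
        have hd : (Q.filter (· < p)).card = Kl + x := by omega
        have hsplit : (Q.filter (· < p)).card + (Q.filter (fun q => p < q)).card = Q.card := by
          rw [← Finset.card_union_of_disjoint]
          · congr 1
            apply Finset.Subset.antisymm
            · intro q hq
              rw [Finset.mem_union, Finset.mem_filter, Finset.mem_filter] at hq
              rcases hq with h | h
              · exact h.1
              · exact h.1
            · intro q hq
              rw [Finset.mem_union, Finset.mem_filter, Finset.mem_filter]
              rcases lt_trichotomy q p with h | h | h
              · exact Or.inl ⟨hq, h⟩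
              · exact absurd (h ▸ hq) hpQ
              · exact Or.inr ⟨hq, h⟩
          · rw [Finset.disjoint_filter]
            intro q _ h1 h2
            exact absurd (lt_trans h1 h2) (lt_irrefl q)
        rw [Finset.mem_product]
        dsimp only
        constructor
        · rw [Finset.mem_powersetCard]
          refine ⟨?_, by rw [hd]⟩
          intro q hq
          rw [Finset.mem_filter] at hq
          exact Finset.mem_Iio.2 hq.2
        · rw [Finset.mem_powersetCard]
          constructor
          · intro q hq
            rw [Finset.mem_filter] at hq
            exact Finset.mem_Ioi.2 hq.2
          · omega
      · -- injectivity
        intro Q1 hQ1 Q2 hQ2 heq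
        rw [Finset.mem_filter, hQ𝒬, Finset.mem_filter] at hQ1 hQ2
        obtain ⟨⟨_, hpQ1, _, _, _⟩, _⟩ := hQ1
        obtain ⟨⟨_, hpQ2, _, _, _⟩, _⟩ := hQ2
        have h1 := congrArg Prod.fst heq
        have h2 := congrArg Prod.snd heq
        simp only at h1 h2
        apply Finset.Subset.antisymm <;> intro q hq
        · rcases lt_trichotomy q p with h | h | h
          · have : q ∈ Q1.filter (· < p) := Finset.mem_filter.2 ⟨hq, h⟩
            rw [h1] at this
            exact (Finset.mem_filter.1 this).1
          · exact absurd (h ▸ hq) hpQ1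
          · have : q ∈ Q1.filter (fun q => p < q) := Finset.mem_filter.2 ⟨hq, h⟩
            rw [h2] at this
            exact (Finset.mem_filter.1 this).1
        · rcases lt_trichotomy q p with h | h | h
          · have : q ∈ Q2.filter (· < p) := Finset.mem_filter.2 ⟨hq, h⟩
            rw [← h1] at this
            exact (Finset.mem_filter.1 this).1
          · exact absurd (h ▸ hq) hpQ2
          · have : q ∈ Q2.filter (fun q => p < q) := Finset.mem_filter.2 ⟨hq, h⟩
            rw [← h2] at this
            exact (Finset.mem_filter.1 this).1
      · -- surjectivity
        rintro ⟨Ab, Aa⟩ hmem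
        rw [Finset.mem_product, Finset.mem_powersetCard, Finset.mem_powersetCard] at hmem
        obtain ⟨⟨hAbs, hAbc⟩, hAas, hAac⟩ := hmem
        dsimp only at hAbs hAbc hAas hAac
        have hdisj : Disjoint Ab Aa := by
          apply Finset.disjoint_left.2
          intro q hq1 hq2
          have h1 := Finset.mem_Iio.1 (hAbs hq1)
          have h2 := Finset.mem_Ioi.1 (hAas hq2)
          exact absurd (lt_trans h1 h2) (lt_irrefl q)
        refine ⟨Ab ∪ Aa, ?_, ?_⟩
        · have hfb : (Ab ∪ Aa).filter (· < p) = Ab := by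
            apply Finset.Subset.antisymm
            · intro q hq
              rw [Finset.mem_filter, Finset.mem_union] at hq
              rcases hq.1 with h | h
              · exact h
              · exact absurd hq.2 (not_lt.2 (le_of_lt (Finset.mem_Ioi.1 (hAas h))))
            · intro q hq
              exact Finset.mem_filter.2 ⟨Finset.mem_union_left _ hq, Finset.mem_Iio.1 (hAbs hq)⟩
          rw [Finset.mem_filter, hQ𝒬, Finset.mem_filter]
          refine ⟨⟨Finset.mem_univ _, ?_, ?_, ?_, ?_⟩, ?_⟩
          · rw [Finset.mem_union]
            rintro (h | h)
            · exact absurd (Finset.mem_Iio.1 (hAbs h)) (lt_irrefl p)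
            · exact absurd (Finset.mem_Ioi.1 (hAas h)) (lt_irrefl p)
          · rw [Finset.card_union_of_disjoint hdisj]
            omega
          · rw [hfb]; omega
          · rw [hfb]; omega
          · rw [hfb]; omega
        · have hfb : (Ab ∪ Aa).filter (· < p) = Ab := by
            apply Finset.Subset.antisymm
            · intro q hq
              rw [Finset.mem_filter, Finset.mem_union] at hq
              rcases hq.1 with h | h
              · exact h
              · exact absurd hq.2 (not_lt.2 (le_of_lt (Finset.mem_Ioi.1 (hAas h))))
            · intro q hq
              exact Finset.mem_filter.2 ⟨Finset.mem_union_left _ hq, Finset.mem_Iio.1 (hAbs hq)⟩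
          have hfa : (Ab ∪ Aa).filter (fun q => p < q) = Aa := by
            apply Finset.Subset.antisymm
            · intro q hq
              rw [Finset.mem_filter, Finset.mem_union] at hq
              rcases hq.1 with h | h
              · exact absurd hq.2 (not_lt.2 (le_of_lt (Finset.mem_Iio.1 (hAbs h))))
              · exact h
            · intro q hq
              exact Finset.mem_filter.2 ⟨Finset.mem_union_right _ hq, Finset.mem_Ioi.1 (hAas hq)⟩
          rw [hfb, hfa]
    rw [hbij, Finset.card_product, Finset.card_powersetCard, Finset.card_powersetCard,
      hcIio, hcIoi]
  
  rw [hN j]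
  rw [Finset.card_eq_sum_card_fiberwise hmaps]
  rw [Finset.sum_congr rfl hfiber, Finset.sum_const, smul_eq_mul, hcount]
end
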